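/- The Ochanine theta function s satisfies: for every z ∈ ℂ such that exp(z) ≠ −q^k for all k ∈ ℤ, one has s(−z) = −s(z) and s(z + 2πiτ) = −s(z); moreover s(z + 2πi) = s(z) for all such z. -/

import Mathlib

/-!
With `u = eᶻ` and `cayley x = (1 - x) / (1 + x)`, the `n`-th factor of the product defining `s`
is `cayley (qⁿu) · cayley (qⁿu⁻¹) · cayley (-qⁿ)²`. Hence `s(z) = -2 C · F(u)`, where
`Θ(x) = ∏_{n ≥ 0} cayley (qⁿx)`, `F(u) = Θ(u) Θ(qu⁻¹)` and `C` depends only on `q`.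
The shift `Θ(x) = cayley x · Θ(qx)` and the symmetry `cayley x⁻¹ = -cayley x` make `F` odd under
`u ↦ u⁻¹`, while `F(qu) = F(u⁻¹)` by inspection. This gives `s(-z) = -s(z)` and
`s(z + 2πiτ) = -s(z)`; periodicity under `2πi` holds because `s` depends only on `eᶻ`.
-/

/-- The nome `q = exp(2πiτ)`. -/
noncomputable def nome (τ : ℂ) : ℂ := Complex.exp (2 * Real.pi * Complex.I * τ)

/-- The Ochanine theta function
`s(z) = -2 (1-eᶻ)/(1+eᶻ) ∏_{n ≥ 1} (1-qⁿeᶻ)(1-qⁿe^{-z})(1+qⁿ)²/((1+qⁿeᶻ)(1+qⁿe^{-z})(1-qⁿ)²)`,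
where the product over integers `n ≥ 1` is encoded as a product over `n : ℕ`
with exponent `n + 1`. -/
noncomputable def ochanineS (τ : ℂ) (z : ℂ) : ℂ :=
  -2 * ((1 - Complex.exp z) / (1 + Complex.exp z)) *
    ∏' n : ℕ,
      ((1 - nome τ ^ (n + 1) * Complex.exp z) * (1 - nome τ ^ (n + 1) * Complex.exp (-z)) *
          (1 + nome τ ^ (n + 1)) ^ 2) /
        ((1 + nome τ ^ (n + 1) * Complex.exp z) * (1 + nome τ ^ (n + 1) * Complex.exp (-z)) *
          (1 - nome τ ^ (n + 1)) ^ 2)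

namespace Ochanine

noncomputable def cayley (x : ℂ) : ℂ := (1 - x) / (1 + x)

lemma cayley_inv {x : ℂ} (hx : x ≠ 0) : cayley x⁻¹ = -cayley x := by
  rw [cayley, cayley, ← mul_div_mul_right _ _ hx, sub_mul, add_mul, inv_mul_cancel₀ hx,
    one_mul, ← neg_div, neg_sub, add_comm]

lemma multipliable_cayley {ι : Type*} {a : ι → ℂ} (ha : Summable a) :
    Multipliable fun i => cayley (a i) := by
  -- a vanishing factor, e.g. the junk value `cayley (-1) = 0`, makes the product trivially `0`
  by_cases! hzero : ∃ i, cayley (a i) = 0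
  · exact multipliable_of_exists_eq_zero hzero
  have hden : ∀ i, 1 + a i ≠ 0 := fun i h => hzero i (by simp [cayley, h])
  have hsummable : Summable fun i => -2 * a i / (1 + a i) := by
    refine (ha.norm.mul_left 4).of_norm_bounded_eventually ?_
    filter_upwards [ha.norm.tendsto_cofinite_zero.eventually_le_const one_half_pos] with i hi
    have hlow : 1 / 2 ≤ ‖1 + a i‖ := by
      linarith [norm_le_add_norm_add (1 : ℂ) (a i), norm_one (α := ℂ)]
    calc ‖-2 * a i / (1 + a i)‖ = 2 * ‖a i‖ / ‖1 + a i‖ := by simp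
      _ ≤ 2 * ‖a i‖ / (1 / 2) := by gcongr
      _ = 4 * ‖a i‖ := by ring
  refine (Complex.multipliable_one_add_of_summable hsummable).congr fun i => ?_
  rw [cayley]
  field_simp [hden i]
  ring

lemma div_mul_div_eq_cayley_mul (a b c : ℂ) :
    (1 - a) * (1 - b) * (1 + c) ^ 2 / ((1 + a) * (1 + b) * (1 - c) ^ 2) =
      cayley a * cayley b * cayley (-c) ^ 2 := by
  rw [cayley, cayley, cayley, div_pow, div_mul_div_comm, div_mul_div_comm, sub_neg_eq_add,
    ← sub_eq_add_neg]

noncomputable def thetaProd (q x : ℂ) : ℂ := ∏' n : ℕ, cayley (q ^ n * x)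

variable {q : ℂ}

lemma multipliable_cayley_geometric (hq : ‖q‖ < 1) (x : ℂ) :
    Multipliable fun n : ℕ => cayley (q ^ n * x) :=
  multipliable_cayley ((summable_geometric_of_norm_lt_one hq).mul_right x)

lemma thetaProd_eq_cayley_mul (hq : ‖q‖ < 1) (x : ℂ) :
    thetaProd q x = cayley x * thetaProd q (q * x) := by
  have hshift : ∀ n : ℕ, q ^ (n + 1) * x = q ^ n * (q * x) := fun n => by ring
  rw [thetaProd, tprod_eq_zero_mul', thetaProd, pow_zero, one_mul]
  · simp only [hshift]
  · simpa only [hshift] using multipliable_cayley_geometric hq (q * x)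

noncomputable def thetaPair (q u : ℂ) : ℂ := thetaProd q u * thetaProd q (q * u⁻¹)

lemma thetaPair_inv (hq : ‖q‖ < 1) {u : ℂ} (hu : u ≠ 0) : thetaPair q u⁻¹ = -thetaPair q u := by
  rw [thetaPair, thetaPair, inv_inv, thetaProd_eq_cayley_mul hq u⁻¹,
    thetaProd_eq_cayley_mul hq u, cayley_inv hu]
  ring

lemma thetaPair_mul_left (hq : q ≠ 0) (u : ℂ) : thetaPair q (q * u) = thetaPair q u⁻¹ := by
  rw [thetaPair, thetaPair, inv_inv, mul_inv, ← mul_assoc, mul_inv_cancel₀ hq, one_mul, mul_comm]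

end Ochanine

open Ochanine

lemma norm_nome_lt_one {τ : ℂ} (hτ : 0 < τ.im) : ‖nome τ‖ < 1 := by
  simpa [nome, Function.Periodic.qParam] using Function.Periodic.norm_qParam_lt_one one_pos hτ

lemma ochanineS_eq_mul_thetaPair {τ : ℂ} (hτ : 0 < τ.im) (z : ℂ) :
    ochanineS τ z =
      -2 * thetaProd (nome τ) (-nome τ) ^ 2 * thetaPair (nome τ) (Complex.exp z) := by
  have hq := norm_nome_lt_one hτ
  have hshift : ∀ (n : ℕ) (x : ℂ), nome τ ^ (n + 1) * x = nome τ ^ n * (nome τ * x) :=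
    fun n x => by ring
  have hneg : ∀ n : ℕ, -nome τ ^ (n + 1) = nome τ ^ n * -nome τ := fun n => by ring
  rw [ochanineS, Complex.exp_neg]
  simp only [div_mul_div_eq_cayley_mul, hshift, hneg]
  rw [((multipliable_cayley_geometric hq _).mul (multipliable_cayley_geometric hq _)).tprod_mul
      ((multipliable_cayley_geometric hq _).pow 2),
    (multipliable_cayley_geometric hq _).tprod_mul (multipliable_cayley_geometric hq _),
    (multipliable_cayley_geometric hq _).tprod_pow, thetaPair,
    thetaProd_eq_cayley_mul hq (Complex.exp z)]
  simp only [thetaProd, cayley]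
  ring

theorem ochanineS_transformation (τ : ℂ) (hτ : 0 < τ.im) :
    ∀ z : ℂ, (∀ k : ℤ, Complex.exp z ≠ -(nome τ ^ k)) →
      ochanineS τ (-z) = -ochanineS τ z ∧
      ochanineS τ (z + 2 * Real.pi * Complex.I * τ) = -ochanineS τ z ∧
      ochanineS τ (z + 2 * Real.pi * Complex.I) = ochanineS τ z := by
  intro z _
  have hq := norm_nome_lt_one hτ
  have hq0 : nome τ ≠ 0 := Complex.exp_ne_zero _
  have hexp_τ : Complex.exp (z + 2 * Real.pi * Complex.I * τ) = nome τ * Complex.exp z := by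
    rw [Complex.exp_add, nome, mul_comm]
  have hexp_one : Complex.exp (z + 2 * Real.pi * Complex.I) = Complex.exp z := by
    rw [Complex.exp_add, Complex.exp_two_pi_mul_I, mul_one]
  simp only [ochanineS_eq_mul_thetaPair hτ, Complex.exp_neg, hexp_τ, hexp_one,
    thetaPair_mul_left hq0, thetaPair_inv hq (Complex.exp_ne_zero z)]
  exact ⟨by ring, by ring, trivial⟩
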